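/- arXiv:2303.10086 — 4 statements merged into one kernel-verified Lean document; each statement's English description precedes it below -/
import Mathlib

section
/- Let p, q ∈ P_d with all entries of q strictly positive, and let m = p ∧ q be their meet. Then min over l ∈ {1, …, d} of E_l(p)/E_l(p ∧ q) equals min over l ∈ {1, …, d} of E_l(p)/E_l(q). (In other words, the optimal probability of conversion from a state with Schmidt vector p to the optimal common resource state p ∧ q equals the optimal probability of conversion from p to q.) -/
open Finset

noncomputable section

/-- Prefix sum of the first `k` entries of `x` (1-based: `x_1 + ⋯ + x_k`). -/
def pfx (d : ℕ) (x : Fin d → ℝ) (k : ℕ) : ℝ :=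
  ∑ i : Fin d, if (i : ℕ) < k then x i else 0

/-- Tail sum `E_l(x) = ∑_{i=l}^d x_i` for 1-based `l ∈ {1,…,d}`; `E_{d+1}(x) = 0`. -/
def Etail (d : ℕ) (x : Fin d → ℝ) (l : ℕ) : ℝ :=
  ∑ i : Fin d, if l ≤ (i : ℕ) + 1 then x i else 0

/-- Membership in `P_d`: decreasingly ordered, nonnegative, summing to 1. -/
def memP (d : ℕ) (x : Fin d → ℝ) : Prop :=
  (∀ i j : Fin d, i ≤ j → x j ≤ x i) ∧ (∀ i, 0 ≤ x i) ∧ (∑ i, x i) = 1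

/-- Majorization `x ≺ y`: all partial sums of `x` bounded by those of `y`, equal total sum. -/
def Maj (d : ℕ) (x y : Fin d → ℝ) : Prop :=
  (∀ k : ℕ, k < d → pfx d x k ≤ pfx d y k) ∧ pfx d x d = pfx d y d

/-- The meet `p ∧ q` of the majorization lattice, defined componentwise. -/
def meet (d : ℕ) (p q : Fin d → ℝ) : Fin d → ℝ :=
  fun i => min (pfx d p ((i : ℕ) + 1)) (pfx d q ((i : ℕ) + 1))
         - min (pfx d p (i : ℕ)) (pfx d q (i : ℕ))


lemma pfx_zero (d : ℕ) (x : Fin d → ℝ) : pfx d x 0 = 0 := by simp [pfx]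

lemma pfx_succ (d : ℕ) (x : Fin d → ℝ) (k : ℕ) (hk : k < d) :
    pfx d x (k+1) = pfx d x k + x ⟨k, hk⟩ := by
  unfold pfx
  have h : ∀ i : Fin d, (if (i:ℕ) < k+1 then x i else 0)
      = (if (i:ℕ) < k then x i else 0) + (if i = ⟨k, hk⟩ then x i else 0) := by
    intro i
    rcases lt_trichotomy (i:ℕ) k with h|h|h
    · simp [h, Nat.lt_succ_of_lt h, Fin.ext_iff, h.ne]
    · simp [h, Fin.ext_iff]
    · have h1 : ¬((i:ℕ) < k+1) := by omega
      have h2 : ¬((i:ℕ) < k) := by omega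
      have h3 : i ≠ (⟨k,hk⟩ : Fin d) := by simp [Fin.ext_iff]; omega
      simp [h1, h2, h3]
  rw [Finset.sum_congr rfl (fun i _ => h i), Finset.sum_add_distrib]
  simp

lemma pfx_top (d : ℕ) (x : Fin d → ℝ) : pfx d x d = ∑ i, x i := by
  unfold pfx; exact Finset.sum_congr rfl fun i _ => by simp [i.isLt]

lemma pfx_meet (d : ℕ) (p q : Fin d → ℝ) : ∀ k, k ≤ d →
    pfx d (meet d p q) k = min (pfx d p k) (pfx d q k) := by
  intro k
  induction k with
  | zero => intro _; simp [pfx_zero]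
  | succ n ih =>
    intro h
    have hn : n < d := h
    rw [pfx_succ d _ n hn, ih (le_of_lt hn)]
    simp only [meet]
    ring

lemma Etail_eq (d : ℕ) (x : Fin d → ℝ) (l : ℕ) :
    Etail d x l = pfx d x d - pfx d x (l-1) := by
  rw [eq_sub_iff_add_eq, pfx_top]
  unfold Etail pfx
  rw [← Finset.sum_add_distrib]
  refine Finset.sum_congr rfl fun i _ => ?_
  by_cases h : l ≤ (i:ℕ) + 1
  · have : ¬ ((i:ℕ) < l - 1) := by omega
    simp [h, this]
  · have : (i:ℕ) < l - 1 := by omega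
    simp [h, this]

lemma Etail_one (d : ℕ) (x : Fin d → ℝ) : Etail d x 1 = ∑ i, x i := by
  unfold Etail; exact Finset.sum_congr rfl fun i _ => by simp

/-- the optimal conversion probability from `p` to the meet `p ∧ q`
equals the optimal conversion probability from `p` to `q`:
`min_l E_l(p)/E_l(p ∧ q) = min_l E_l(p)/E_l(q)`. -/
theorem optimal_probability_to_meet (d : ℕ) (hd : 1 ≤ d) (p q : Fin d → ℝ)
    (hp : memP d p) (hq : memP d q) (hqpos : ∀ i, 0 < q i) :
    ((Finset.Icc 1 d).inf' (Finset.nonempty_Icc.mpr hd)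
        fun l => Etail d p l / Etail d (meet d p q) l)
      = (Finset.Icc 1 d).inf' (Finset.nonempty_Icc.mpr hd)
        fun l => Etail d p l / Etail d q l := by
  obtain ⟨-, hpnn, hpsum⟩ := hp
  obtain ⟨-, hqnn, hqsum⟩ := hq
  have hpd : pfx d p d = 1 := by rw [pfx_top]; exact hpsum
  have hqd : pfx d q d = 1 := by rw [pfx_top]; exact hqsum
  have hBpos : ∀ l ∈ Finset.Icc 1 d, 0 < Etail d q l := by
    intro l hl
    rw [Finset.mem_Icc] at hl
    unfold Etail
    apply Finset.sum_pos'
    · intro i _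
      by_cases h : l ≤ (i:ℕ)+1 <;> simp [h, (hqpos i).le]
    · refine ⟨⟨d-1, by omega⟩, Finset.mem_univ _, ?_⟩
      have : l ≤ (d-1) + 1 := by omega
      simp only [this, if_pos]
      exact hqpos _
  have hM : ∀ l ∈ Finset.Icc 1 d,
      Etail d (meet d p q) l = max (Etail d p l) (Etail d q l) := by
    intro l hl
    rw [Finset.mem_Icc] at hl
    have hl1 : l - 1 ≤ d := by omega
    rw [Etail_eq, Etail_eq, Etail_eq, pfx_meet d p q d le_rfl,
        pfx_meet d p q (l-1) hl1, hpd, hqd, min_self]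
    rcases le_total (pfx d p (l-1)) (pfx d q (l-1)) with h | h
    · rw [min_eq_left h, max_eq_left (by linarith)]
    · rw [min_eq_right h, max_eq_right (by linarith)]
  have hterm : ∀ l ∈ Finset.Icc 1 d,
      Etail d p l / Etail d (meet d p q) l = min 1 (Etail d p l / Etail d q l) := by
    intro l hl
    rw [hM l hl]
    rcases le_total (Etail d p l) (Etail d q l) with h | h
    · rw [max_eq_right h, min_eq_right ((div_le_one (hBpos l hl)).mpr h)]
    · have hApos : 0 < Etail d p l := lt_of_lt_of_le (hBpos l hl) h
      rw [max_eq_left h, div_self hApos.ne',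
          min_eq_left ((one_le_div (hBpos l hl)).mpr h)]
  have h1mem : 1 ∈ Finset.Icc 1 d := Finset.mem_Icc.mpr ⟨le_rfl, hd⟩
  have hf1 : Etail d p 1 / Etail d q 1 = 1 := by
    rw [Etail_one, Etail_one, hpsum, hqsum]; norm_num
  apply le_antisymm
  · apply Finset.le_inf'
    intro b hb
    calc ((Finset.Icc 1 d).inf' (Finset.nonempty_Icc.mpr hd)
        fun l => Etail d p l / Etail d (meet d p q) l)
        ≤ Etail d p b / Etail d (meet d p q) b := Finset.inf'_le _ hb
      _ = min 1 (Etail d p b / Etail d q b) := hterm b hb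
      _ ≤ Etail d p b / Etail d q b := min_le_right _ _
  · apply Finset.le_inf'
    intro b hb
    rw [hterm b hb]
    refine le_min ?_ (Finset.inf'_le _ hb)
    calc ((Finset.Icc 1 d).inf' (Finset.nonempty_Icc.mpr hd)
        fun l => Etail d p l / Etail d q l)
        ≤ Etail d p 1 / Etail d q 1 := Finset.inf'_le _ h1mem
      _ = 1 := hf1


end
end

section
/- Let x, y ∈ P_d with x ≺ y, and let a = (a_1, …, a_d) ∈ ℝ^d satisfy a_1 ≥ a_2 ≥ … ≥ a_d ≥ 0 and ∑_{i=1}^d a_i x_i = ∑_{i=1}^d a_i y_i = 1. Then the Hadamard (element-wise) products satisfy a ⊙ x ≺ a ⊙ y, i.e., ∑_{i=1}^k a_i x_i ≤ ∑_{i=1}^k a_i y_i for all k ∈ {1, …, d−1} and ∑_{i=1}^d a_i x_i = ∑_{i=1}^d a_i y_i. -/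
open Finset

noncomputable section

/-- Lemma 2 of the paper: if `x ≺ y` and `a` is decreasingly ordered with
nonnegative entries such that `∑ a_i x_i = ∑ a_i y_i = 1`, then `a ⊙ x ≺ a ⊙ y`. -/
theorem hadamard_majorization (d : ℕ) (x y : Fin d → ℝ)
    (hx : memP d x) (hy : memP d y) (hxy : Maj d x y)
    (a : Fin d → ℝ)
    (ha_dec : ∀ i j : Fin d, i ≤ j → a j ≤ a i) (ha_nonneg : ∀ i, 0 ≤ a i)
    (hax : ∑ i, a i * x i = 1) (hay : ∑ i, a i * y i = 1) :
    Maj d (fun i => a i * x i) (fun i => a i * y i) := by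
  have pfx_zero : ∀ f : Fin d → ℝ, pfx d f 0 = 0 := by
    intro f; simp [pfx]
  have pfx_succ : ∀ (f : Fin d → ℝ) (k : ℕ) (hk : k < d),
      pfx d f (k+1) = pfx d f k + f ⟨k, hk⟩ := by
    intro f k hk
    have h1 : ∀ i : Fin d, (if (i : ℕ) < k+1 then f i else 0)
        = (if (i : ℕ) < k then f i else 0) + (if i = ⟨k, hk⟩ then f i else 0) := by
      intro i
      rcases lt_trichotomy (i : ℕ) k with h | h | h
      · have : i ≠ ⟨k, hk⟩ := by simp [Fin.ext_iff]; omega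
        simp [h, Nat.lt_succ_of_lt h, this]
      · have : i = ⟨k, hk⟩ := by simp [Fin.ext_iff, h]
        simp [this, h]
      · have h2 : ¬ (i : ℕ) < k + 1 := by omega
        have h3 : ¬ (i : ℕ) < k := by omega
        have : i ≠ ⟨k, hk⟩ := by simp [Fin.ext_iff]; omega
        simp [h2, h3, this]
    simp only [pfx, h1, Finset.sum_add_distrib, Finset.sum_ite_eq', Finset.mem_univ, if_true]
  have pfx_top : ∀ f : Fin d → ℝ, pfx d f d = ∑ i, f i := by
    intro f; simp [pfx, Fin.is_lt]
  -- S k ≤ 0 for all k ≤ d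
  have hS : ∀ k : ℕ, k ≤ d → pfx d x k - pfx d y k ≤ 0 := by
    intro k hk
    rcases lt_or_eq_of_le hk with h | h
    · have := hxy.1 k h; linarith
    · subst h; have := hxy.2; linarith
  -- the coefficient sequence
  set A : ℕ → ℝ := fun k => if h : k < d then a ⟨k, h⟩ else 0 with hA
  have hA_nonneg : ∀ k, 0 ≤ A k := by
    intro k; by_cases h : k < d <;> simp [hA, h, ha_nonneg]
  have key : ∀ k : ℕ, k ≤ d →
      pfx d (fun i => a i * x i) k - pfx d (fun i => a i * y i) k
        ≤ A k * (pfx d x k - pfx d y k) := by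
    intro k
    induction k with
    | zero => intro _; simp [pfx_zero]
    | succ k ih =>
      intro hk1
      have hk : k < d := by omega
      have IH := ih (le_of_lt hk)
      have e1 := pfx_succ (fun i => a i * x i) k hk
      have e2 := pfx_succ (fun i => a i * y i) k hk
      have e3 := pfx_succ x k hk
      have e4 := pfx_succ y k hk
      have hAk : A k = a ⟨k, hk⟩ := by simp [hA, hk]
      have step1 : pfx d (fun i => a i * x i) (k+1) - pfx d (fun i => a i * y i) (k+1)
          ≤ a ⟨k, hk⟩ * (pfx d x (k+1) - pfx d y (k+1)) := by
        rw [e1, e2, e3, e4]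
        rw [hAk] at IH
        nlinarith [IH]
      have hS1 : pfx d x (k+1) - pfx d y (k+1) ≤ 0 := hS (k+1) hk1
      have hAle : A (k+1) ≤ a ⟨k, hk⟩ := by
        by_cases h : k + 1 < d
        · simp only [hA, dif_pos h]
          exact ha_dec ⟨k, hk⟩ ⟨k+1, h⟩ (by simp [Fin.le_def])
        · simp only [hA, dif_neg h]
          exact ha_nonneg _
      calc pfx d (fun i => a i * x i) (k+1) - pfx d (fun i => a i * y i) (k+1)
          ≤ a ⟨k, hk⟩ * (pfx d x (k+1) - pfx d y (k+1)) := step1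
        _ ≤ A (k+1) * (pfx d x (k+1) - pfx d y (k+1)) := by nlinarith
  constructor
  · intro k hk
    have h1 := key k (le_of_lt hk)
    have h2 := hS k (le_of_lt hk)
    have h3 := hA_nonneg k
    nlinarith
  · rw [pfx_top, pfx_top, hax, hay]

end
end

section
/- Let p, q ∈ P_d with all entries of p and q strictly positive, and let (l_j, r_j)_{j=0}^k be the Vidal recursion for the pair (p, q). Then 0 < r_1 < r_2 < … < r_k and d+1 = l_0 > l_1 > … > l_k = 1. Consequently, the vector r ∈ ℝ^d defined by r_i = r_j for i ∈ {l_j, …, l_{j−1}−1} is decreasingly ordered (r_1 ≥ r_2 ≥ … ≥ r_d, componentwise) with strictly positive entries. -/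
open Finset

noncomputable section

/-- The ratio `(E_l(p) − E_L(p)) / (E_l(q) − E_L(q))` of the Vidal recursion. -/
def ratio (d : ℕ) (p q : Fin d → ℝ) (L l : ℕ) : ℝ :=
  (Etail d p l - Etail d p L) / (Etail d q l - Etail d q L)

/-- The smallest minimizer of `l ↦ ratio d p q L l` over `l ∈ {1,…,L−1}`. -/
def nextIdx (d : ℕ) (p q : Fin d → ℝ) (L : ℕ) : ℕ :=
  sInf {l | l ∈ Finset.Icc 1 (L - 1) ∧
        ∀ l' ∈ Finset.Icc 1 (L - 1), ratio d p q L l ≤ ratio d p q L l'}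

/-- Sequence of indices `l_j` of the Vidal recursion: `l_0 = d+1`,
`l_j` = smallest minimizer of the ratio over `{1,…,l_{j−1}−1}`. -/
def lSeq (d : ℕ) (p q : Fin d → ℝ) : ℕ → ℕ
  | 0 => d + 1
  | j + 1 => nextIdx d p q (lSeq d p q j)

/-- Ratios `r_j` of the Vidal recursion (meaningful for `j ≥ 1`):
`r_j = (E_{l_j}(p) − E_{l_{j−1}}(p)) / (E_{l_j}(q) − E_{l_{j−1}}(q))`. -/
def rSeq (d : ℕ) (p q : Fin d → ℝ) (j : ℕ) : ℝ :=
  ratio d p q (lSeq d p q (j - 1)) (lSeq d p q j)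



lemma Etail_sub_pos (d : ℕ) (x : Fin d → ℝ) (hx : ∀ i, 0 < x i) {l L : ℕ}
    (hl : 1 ≤ l) (hlL : l < L) (hL : L ≤ d + 1) :
    0 < Etail d x l - Etail d x L := by
  have h : Etail d x l - Etail d x L
      = ∑ i : Fin d, ((if l ≤ (i:ℕ)+1 then x i else 0) - (if L ≤ (i:ℕ)+1 then x i else 0)) := by
    rw [Etail, Etail, ← Finset.sum_sub_distrib]
  rw [h]
  apply Finset.sum_pos'
  · intro i _
    by_cases hL' : L ≤ (i:ℕ)+1
    · rw [if_pos hL', if_pos (by omega : l ≤ (i:ℕ)+1)]; simp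
    · rw [if_neg hL', sub_zero]
      split
      · exact (hx _).le
      · exact le_refl 0
  · refine ⟨⟨l-1, by omega⟩, Finset.mem_univ _, ?_⟩
    have h1 : ((⟨l-1, by omega⟩ : Fin d) : ℕ) + 1 = l := by simp; omega
    rw [h1, if_pos le_rfl, if_neg (by omega), sub_zero]
    exact hx _

lemma ratio_pos (d : ℕ) (p q : Fin d → ℝ) (hp : ∀ i, 0 < p i) (hq : ∀ i, 0 < q i)
    {l L : ℕ} (hl : 1 ≤ l) (hlL : l < L) (hL : L ≤ d + 1) :
    0 < ratio d p q L l :=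
  div_pos (Etail_sub_pos d p hp hl hlL hL) (Etail_sub_pos d q hq hl hlL hL)

lemma nextIdx_mem (d : ℕ) (p q : Fin d → ℝ) {L : ℕ} (hL2 : 2 ≤ L) :
    nextIdx d p q L ∈ Finset.Icc 1 (L-1) ∧
    (∀ l' ∈ Finset.Icc 1 (L-1), ratio d p q L (nextIdx d p q L) ≤ ratio d p q L l') := by
  have hne : (Finset.Icc 1 (L-1)).Nonempty := ⟨1, by simp; omega⟩
  obtain ⟨m, hm, hmin⟩ := Finset.exists_min_image (Finset.Icc 1 (L-1)) (ratio d p q L) hne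
  exact Nat.sInf_mem (⟨m, hm, hmin⟩ : {l | l ∈ Finset.Icc 1 (L - 1) ∧
        ∀ l' ∈ Finset.Icc 1 (L - 1), ratio d p q L l ≤ ratio d p q L l'}.Nonempty)

lemma nextIdx_le (d : ℕ) (p q : Fin d → ℝ) {L l : ℕ}
    (hmem : l ∈ Finset.Icc 1 (L-1))
    (hmin : ∀ l' ∈ Finset.Icc 1 (L-1), ratio d p q L l ≤ ratio d p q L l') :
    nextIdx d p q L ≤ l :=
  Nat.sInf_le ⟨hmem, hmin⟩

lemma mediant_le {a1 a2 b1 b2 : ℝ} (hb1 : 0 < b1) (hb2 : 0 < b2) (h : a2/b2 ≤ a1/b1) :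
    (a1+a2)/(b1+b2) ≤ a1/b1 := by
  rw [div_le_div_iff₀ (by linarith) hb1]
  rw [div_le_div_iff₀ hb2 hb1] at h
  nlinarith

/-- the ratios of the Vidal recursion satisfy `0 < r_1 < ⋯ < r_k` and the
indices satisfy `d+1 = l_0 > l_1 > ⋯ > l_k = 1`; consequently the blockwise vector `r`
with `r_i = r_j` for `i ∈ {l_j,…,l_{j−1}−1}` is decreasingly ordered with positive
entries. -/
theorem vidal_ratios_increasing (d : ℕ) (hd : 1 ≤ d) (p q : Fin d → ℝ)
    (hp : memP d p) (hq : memP d q)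
    (hppos : ∀ i, 0 < p i) (hqpos : ∀ i, 0 < q i)
    (k : ℕ) (hk : lSeq d p q k = 1) (hk' : ∀ j < k, lSeq d p q j ≠ 1)
    (rvec : Fin d → ℝ)
    (hrvec : ∀ j ∈ Finset.Icc 1 k, ∀ i : Fin d,
      lSeq d p q j ≤ (i : ℕ) + 1 → (i : ℕ) + 1 ≤ lSeq d p q (j - 1) - 1 →
      rvec i = rSeq d p q j) :
    0 < rSeq d p q 1 ∧
    (∀ j, 1 ≤ j → j < k → rSeq d p q j < rSeq d p q (j + 1)) ∧
    lSeq d p q 0 = d + 1 ∧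
    (∀ j < k, lSeq d p q (j + 1) < lSeq d p q j) ∧
    lSeq d p q k = 1 ∧
    (∀ i j : Fin d, i ≤ j → rvec j ≤ rvec i) ∧
    (∀ i, 0 < rvec i) := by
  have hl0 : lSeq d p q 0 = d + 1 := rfl
  have hstep : ∀ m, lSeq d p q (m+1) = nextIdx d p q (lSeq d p q m) := fun m => rfl
  -- bounds on lSeq
  have hbound : ∀ j, j ≤ k → 1 ≤ lSeq d p q j ∧ lSeq d p q j ≤ d + 1 := by
    intro j
    induction j with
    | zero => intro _; rw [hl0]; omega
    | succ m ih =>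
      intro hmk
      have h1 := ih (by omega)
      have h2 : 2 ≤ lSeq d p q m := by
        have := hk' m (by omega); omega
      have hspec := (nextIdx_mem d p q h2).1
      rw [Finset.mem_Icc] at hspec
      rw [hstep]; omega
  -- strict decrease at each step
  have hdec : ∀ j < k, lSeq d p q (j + 1) < lSeq d p q j := by
    intro j hj
    have h1 := hbound j (le_of_lt hj)
    have h2 : 2 ≤ lSeq d p q j := by have := hk' j hj; omega
    have hspec := (nextIdx_mem d p q h2).1
    rw [Finset.mem_Icc] at hspec
    rw [hstep]; omega
  -- k ≥ 1
  have hk1 : 1 ≤ k := by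
    by_contra h
    have hk0 : k = 0 := by omega
    rw [hk0, hl0] at hk; omega
  -- positivity of ratios
  have rpos : ∀ j, 1 ≤ j → j ≤ k → 0 < rSeq d p q j := by
    intro j hj1 hjk
    obtain ⟨m, rfl⟩ : ∃ m, j = m + 1 := ⟨j - 1, by omega⟩
    have h1 := hbound m (by omega)
    have h2 := hbound (m+1) hjk
    have h3 := hdec m (by omega)
    have : rSeq d p q (m+1) = ratio d p q (lSeq d p q m) (lSeq d p q (m+1)) := by
      simp [rSeq]
    rw [this]
    exact ratio_pos d p q hppos hqpos h2.1 h3 h1.2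
  -- strict increase of ratios
  have rstrict : ∀ j, 1 ≤ j → j < k → rSeq d p q j < rSeq d p q (j + 1) := by
    intro j hj1 hjk
    obtain ⟨m, rfl⟩ : ∃ m, j = m + 1 := ⟨j - 1, by omega⟩
    set L2 := lSeq d p q m with hL2
    set L1 := lSeq d p q (m+1) with hL1
    set L0 := lSeq d p q (m+2) with hL0
    have hb2 := hbound m (by omega)
    have hd1 : L1 < L2 := hdec m (by omega)
    have hd0 : L0 < L1 := hdec (m+1) hjk
    have hb0 := hbound (m+2) (by omega)
    have hb1pos : 0 < Etail d q L1 - Etail d q L2 :=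
      Etail_sub_pos d q hqpos (by omega) hd1 hb2.2
    have hb2pos : 0 < Etail d q L0 - Etail d q L1 :=
      Etail_sub_pos d q hqpos hb0.1 hd0 (by omega)
    have hr1 : rSeq d p q (m+1) = (Etail d p L1 - Etail d p L2) / (Etail d q L1 - Etail d q L2) := by
      simp [rSeq, ratio]; rfl
    have hr2 : rSeq d p q (m+2) = (Etail d p L0 - Etail d p L1) / (Etail d q L0 - Etail d q L1) := by
      simp [rSeq, ratio]; rfl
    by_contra hcon
    push_neg at hcon
    rw [hr1, hr2] at hcon
    have hmed := mediant_le hb1pos hb2pos hcon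
    have he1 : (Etail d p L1 - Etail d p L2) + (Etail d p L0 - Etail d p L1)
        = Etail d p L0 - Etail d p L2 := by ring
    have he2 : (Etail d q L1 - Etail d q L2) + (Etail d q L0 - Etail d q L1)
        = Etail d q L0 - Etail d q L2 := by ring
    rw [he1, he2] at hmed
    -- so ratio L2 L0 ≤ ratio L2 L1 = min value
    have h2L2 : 2 ≤ L2 := by have := hk' m (by omega); omega
    have hspec := nextIdx_mem d p q h2L2
    have hL1eq : L1 = nextIdx d p q L2 := hstep m
    have hmin0 : ∀ l' ∈ Finset.Icc 1 (L2-1), ratio d p q L2 L0 ≤ ratio d p q L2 l' := by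
      intro l' hl'
      calc ratio d p q L2 L0 ≤ ratio d p q L2 L1 := hmed
        _ ≤ ratio d p q L2 l' := by rw [hL1eq]; exact hspec.2 l' hl'
    have hmem0 : L0 ∈ Finset.Icc 1 (L2-1) := by
      rw [Finset.mem_Icc]; omega
    have := nextIdx_le d p q hmem0 hmin0
    rw [← hL1eq] at this
    omega
  -- monotone (non-strict) ratios
  have rmono : ∀ b, b ≤ k → ∀ a, 1 ≤ a → a ≤ b → rSeq d p q a ≤ rSeq d p q b := by
    intro b
    induction b with
    | zero => intro _ a ha1 ha2; omega
    | succ m ih =>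
      intro hbk a ha1 ha2
      rcases Nat.lt_succ_iff_lt_or_eq.mp (Nat.lt_succ_of_le ha2) with h | h
      · rcases Nat.lt_succ_iff_lt_or_eq.mp (Nat.lt_succ_of_le ha2) with _ | _
        all_goals {
          by_cases hcase : a = m + 1
          · rw [hcase]
          · have ham : a ≤ m := by omega
            have h1 : rSeq d p q a ≤ rSeq d p q m := ih (by omega) a ha1 ham
            have h2 : rSeq d p q m < rSeq d p q (m+1) := rstrict m (by omega) (by omega)
            linarith }
      · rw [h]
  -- block decomposition
  have hblock : ∀ i : Fin d, ∃ j, 1 ≤ j ∧ j ≤ k ∧ rvec i = rSeq d p q j ∧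
      lSeq d p q j ≤ (i:ℕ)+1 ∧ (∀ j', lSeq d p q j' ≤ (i:ℕ)+1 → j ≤ j') := by
    intro i
    have hex : ∃ j, lSeq d p q j ≤ (i:ℕ)+1 := ⟨k, by rw [hk]; omega⟩
    set J := Nat.find hex with hJ
    have hJspec : lSeq d p q J ≤ (i:ℕ)+1 := Nat.find_spec hex
    have hJk : J ≤ k := Nat.find_min' hex (by rw [hk]; omega)
    have hJ1 : 1 ≤ J := by
      rcases Nat.eq_zero_or_pos J with h0 | h0
      · exfalso; rw [h0, hl0] at hJspec; have := i.isLt; omega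
      · exact h0
    obtain ⟨m, hm⟩ : ∃ m, J = m + 1 := ⟨J - 1, by omega⟩
    have hnot : ¬ (lSeq d p q m ≤ (i:ℕ)+1) := Nat.find_min hex (by omega)
    have hub : (i:ℕ)+1 ≤ lSeq d p q (J-1) - 1 := by
      rw [hm]; simp; omega
    refine ⟨J, hJ1, hJk, ?_, hJspec, fun j' hj' => Nat.find_min' hex hj'⟩
    exact hrvec J (Finset.mem_Icc.mpr ⟨hJ1, hJk⟩) i hJspec hub
  refine ⟨rpos 1 le_rfl hk1, rstrict, hl0, hdec, hk, ?_, ?_⟩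
  · intro i j hij
    obtain ⟨Ji, hJi1, hJik, hJieq, hJile, hJimin⟩ := hblock i
    obtain ⟨Jj, hJj1, hJjk, hJjeq, hJjle, hJjmin⟩ := hblock j
    rw [hJieq, hJjeq]
    have hle : lSeq d p q Ji ≤ (j:ℕ)+1 := le_trans hJile (by
      have : (i:ℕ) ≤ (j:ℕ) := hij
      omega)
    have : Jj ≤ Ji := hJjmin Ji hle
    exact rmono Ji hJik Jj hJj1 this
  · intro i
    obtain ⟨Ji, hJi1, hJik, hJieq, _, _⟩ := hblock i
    rw [hJieq]
    exact rpos Ji hJi1 hJik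


end
end

section
/- Let p, f ∈ P_d with all entries of p and f strictly positive, and suppose v ∈ P_d is the least upper bound (join) of {p, f} in (P_d, ≺), i.e., p ≺ v, f ≺ v, and for every w ∈ P_d with p ≺ w and f ≺ w one has v ≺ w. Then min over l ∈ {1, …, d} of E_l(v)/E_l(f) equals min over l ∈ {1, …, d} of E_l(p)/E_l(f). (The optimal probability of conversion from the optimal common product state p ∨ f to the target f equals the optimal probability of conversion from p to f; this is the optimality of the greedy protocol.) -/
open Finset

noncomputable section

lemma pfx_add_Etail (d : ℕ) (x : Fin d → ℝ) (k : ℕ) :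
    pfx d x k + Etail d x (k+1) = ∑ i, x i := by
  unfold pfx Etail
  rw [← Finset.sum_add_distrib]
  refine Finset.sum_congr rfl fun i _ => ?_
  split_ifs <;> first | omega | ring

lemma pfx_le_sum (d : ℕ) (x : Fin d → ℝ) (hx : ∀ i, 0 ≤ x i) (k : ℕ) :
    pfx d x k ≤ ∑ i, x i := by
  refine Finset.sum_le_sum fun i _ => ?_
  split_ifs
  · exact le_refl _
  · exact hx i

lemma Etail_pos (d : ℕ) (hd : 1 ≤ d) (x : Fin d → ℝ) (hx : ∀ i, 0 < x i)
    (l : ℕ) (hl : l ≤ d) : 0 < Etail d x l := by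
  unfold Etail
  have hi : (⟨d-1, by omega⟩ : Fin d) ∈ Finset.univ := Finset.mem_univ _
  refine Finset.sum_pos' (fun i _ => by split_ifs; exacts [(hx i).le, le_refl 0]) ⟨⟨d-1, by omega⟩, hi, ?_⟩
  have : l ≤ (d-1) + 1 := by omega
  simp only [this, if_pos]
  exact hx _

lemma pfx_shift (d : ℕ) (hd : 1 ≤ d) (a b : ℝ) (f : Fin d → ℝ) (k : ℕ) :
    pfx d (fun i => a * f i + if (i : ℕ) = 0 then b else 0) k
      = a * pfx d f k + if 1 ≤ k then b else 0 := by
  unfold pfx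
  have h1 : (∑ i : Fin d, if (i:ℕ) < k then (a * f i + if (i:ℕ)=0 then b else 0) else 0)
      = (∑ i : Fin d, if (i:ℕ) < k then a * f i else 0)
        + ∑ i : Fin d, if (i:ℕ) < k then (if (i:ℕ)=0 then b else 0) else 0 := by
    rw [← Finset.sum_add_distrib]
    exact Finset.sum_congr rfl fun i _ => by split_ifs <;> ring
  rw [h1]
  congr 1
  · rw [Finset.mul_sum]
    exact Finset.sum_congr rfl fun i _ => by split_ifs <;> ring
  · rw [Finset.sum_eq_single_of_mem (⟨0, by omega⟩ : Fin d) (Finset.mem_univ _)]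
    · by_cases hk : 1 ≤ k
      · simp [hk, Nat.lt_of_lt_of_le Nat.zero_lt_one hk]
      · have : ¬ ((0:ℕ) < k) := by omega
        simp [hk, this]
    · intro i _ hi
      have : (i:ℕ) ≠ 0 := fun h => hi (Fin.ext h)
      split_ifs <;> simp_all

/-- optimality of the greedy protocol: if `v` is the least upper bound
(join) of `{p, f}` in `(P_d, ≺)`, then the optimal conversion probability from `v` to `f`
equals that from `p` to `f`: `min_l E_l(v)/E_l(f) = min_l E_l(p)/E_l(f)`. -/
theorem greedy_optimal (d : ℕ) (hd : 1 ≤ d) (p f v : Fin d → ℝ)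
    (hp : memP d p) (hf : memP d f) (hv : memP d v)
    (hppos : ∀ i, 0 < p i) (hfpos : ∀ i, 0 < f i)
    (hpv : Maj d p v) (hfv : Maj d f v)
    (hlub : ∀ w : Fin d → ℝ, memP d w → Maj d p w → Maj d f w → Maj d v w) :
    ((Finset.Icc 1 d).inf' (Finset.nonempty_Icc.mpr hd)
        fun l => Etail d v l / Etail d f l)
      = (Finset.Icc 1 d).inf' (Finset.nonempty_Icc.mpr hd)
          fun l => Etail d p l / Etail d f l := by
  have hne : (Finset.Icc 1 d).Nonempty := Finset.nonempty_Icc.mpr hd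
  set lam : ℝ := (Finset.Icc 1 d).inf' hne (fun l => Etail d p l / Etail d f l) with hlam
  have hfpos' : ∀ l, l ≤ d → 0 < Etail d f l := fun l hl => Etail_pos d hd f hfpos l hl
  have hppos' : ∀ l, l ≤ d → 0 < Etail d p l := fun l hl => Etail_pos d hd p hppos l hl
  -- lam ≤ 1
  have h1mem : 1 ∈ Finset.Icc 1 d := Finset.mem_Icc.mpr ⟨le_refl 1, hd⟩
  have hE1p : Etail d p 1 = 1 := by rw [Etail_one, hp.2.2]
  have hE1f : Etail d f 1 = 1 := by rw [Etail_one, hf.2.2]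
  have hlam1 : lam ≤ 1 := by
    have := Finset.inf'_le (fun l => Etail d p l / Etail d f l) h1mem
    rwa [hE1p, hE1f, div_one] at this
  have hlampos : 0 < lam := by
    rw [hlam, Finset.lt_inf'_iff]
    intro l hl
    exact div_pos (hppos' l (Finset.mem_Icc.mp hl).2) (hfpos' l (Finset.mem_Icc.mp hl).2)
  -- key inequality
  have hkey : ∀ l, 1 ≤ l → l ≤ d → lam * Etail d f l ≤ Etail d p l := by
    intro l h1 h2
    have hm : l ∈ Finset.Icc 1 d := Finset.mem_Icc.mpr ⟨h1, h2⟩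
    have := Finset.inf'_le (fun l => Etail d p l / Etail d f l) hm
    rw [← hlam] at this
    have hfl := hfpos' l h2
    calc lam * Etail d f l ≤ (Etail d p l / Etail d f l) * Etail d f l :=
          mul_le_mul_of_nonneg_right this hfl.le
      _ = Etail d p l := by field_simp
  -- the witness w
  set w : Fin d → ℝ := fun i => lam * f i + if (i : ℕ) = 0 then 1 - lam else 0 with hw
  have hpw : ∀ k, pfx d w k = lam * pfx d f k + if 1 ≤ k then 1 - lam else 0 :=
    fun k => pfx_shift d hd lam (1 - lam) f k
  have hsumw : ∑ i, w i = 1 := by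
    have := hpw d
    rw [← pfx_top, this, pfx_top, hf.2.2]
    simp [hd]
  have hmemw : memP d w := by
    refine ⟨?_, ?_, hsumw⟩
    · intro i j hij
      by_cases hi : (i : ℕ) = 0
      · by_cases hj : (j : ℕ) = 0
        · have : i = j := Fin.ext (by omega)
          rw [this]
        · simp only [hw, hi, hj, if_pos, if_neg, ite_true, ite_false]
          have h1 : f j ≤ f i := hf.1 i j hij
          nlinarith [(hfpos j).le]
      · have hj : (j : ℕ) ≠ 0 := by
          have := (Fin.le_def.mp hij); omega
        simp only [hw, hi, hj, ite_false]
        have h1 : f j ≤ f i := hf.1 i j hij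
        nlinarith
    · intro i
      have := (hfpos i).le
      by_cases hi : (i : ℕ) = 0 <;> simp [hw, hi] <;> nlinarith
  have hfk1 : ∀ k, pfx d f k ≤ 1 := by
    intro k; rw [← hf.2.2]; exact pfx_le_sum d f hf.2.1 k
  have hmajpw : Maj d p w := by
    constructor
    · intro k hk
      rcases Nat.eq_zero_or_pos k with rfl | hk0
      <;> [skip; (have hk1 : 1 ≤ k := hk0)]
      · rw [pfx_zero, pfx_zero]
      · rw [hpw k, if_pos hk1]
        have hEp : pfx d p k = 1 - Etail d p (k+1) := by
          have := pfx_add_Etail d p k; rw [hp.2.2] at this; linarith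
        have hEf : pfx d f k = 1 - Etail d f (k+1) := by
          have := pfx_add_Etail d f k; rw [hf.2.2] at this; linarith
        have := hkey (k+1) (by omega) (by omega)
        rw [hEp, hEf]; linarith
    · rw [pfx_top, pfx_top, hp.2.2, hsumw]
  have hmajfw : Maj d f w := by
    constructor
    · intro k hk
      rcases Nat.eq_zero_or_pos k with rfl | hk0
      <;> [skip; (have hk1 : 1 ≤ k := hk0)]
      · rw [pfx_zero, pfx_zero]
      · rw [hpw k, if_pos hk1]
        have := hfk1 k
        nlinarith
    · rw [pfx_top, pfx_top, hf.2.2, hsumw]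
  have hmajvw : Maj d v w := hlub w hmemw hmajpw hmajfw
  -- lower bound: lam ≤ each v-term
  have hlow : ∀ l ∈ Finset.Icc 1 d, lam ≤ Etail d v l / Etail d f l := by
    intro l hl
    obtain ⟨h1, h2⟩ := Finset.mem_Icc.mp hl
    obtain ⟨k, rfl⟩ : ∃ k, l = k + 1 := ⟨l - 1, by omega⟩
    have hfl := hfpos' (k+1) h2
    rw [le_div_iff₀ hfl]
    have hEv : pfx d v k = 1 - Etail d v (k+1) := by
      have := pfx_add_Etail d v k; rw [hv.2.2] at this; linarith
    have hEf : pfx d f k = 1 - Etail d f (k+1) := by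
      have := pfx_add_Etail d f k; rw [hf.2.2] at this; linarith
    have hvw := hmajvw.1 k (by omega)
    rcases Nat.eq_zero_or_pos k with rfl | hk0
      <;> [skip; (have hk1 : 1 ≤ k := hk0)]
    · rw [show (0:ℕ)+1 = 1 from rfl, Etail_one, Etail_one, hf.2.2, hv.2.2]; nlinarith
    · rw [hpw k, if_pos hk1] at hvw
      rw [hEv, hEf] at hvw
      nlinarith
  -- upper bound: each v-term ≤ p-term
  have hupp : ∀ l ∈ Finset.Icc 1 d, Etail d v l ≤ Etail d p l := by
    intro l hl
    obtain ⟨h1, h2⟩ := Finset.mem_Icc.mp hl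
    obtain ⟨k, rfl⟩ : ∃ k, l = k + 1 := ⟨l - 1, by omega⟩
    have hsv : ∑ i, v i = 1 := hv.2.2
    have hEv := pfx_add_Etail d v k
    have hEp := pfx_add_Etail d p k
    rw [hsv] at hEv; rw [hp.2.2] at hEp
    have := hpv.1 k (by omega)
    linarith
  apply le_antisymm
  · apply Finset.le_inf'
    intro l hl
    have h2 := (Finset.mem_Icc.mp hl).2
    refine le_trans (Finset.inf'_le _ hl) ?_
    have hfl := hfpos' l h2
    gcongr
    exact hupp l hl
  · exact Finset.le_inf' _ _ hlow


end
end
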